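/- arXiv:1703.08703 — 2 statements merged into one kernel-verified Lean document; each statement's English description precedes it below -/
import Mathlib

section
/- Let (ξ_n) be a sequence of critical portraits of degree d that Hausdorff-converges to a critical portrait ξ. If m_n denotes the primitive major induced by ξ_n and m the primitive major induced by ξ, then md(m_n, m) → 0, i.e. the majors (m_n) converge to m in Thurston's metric on PM(d). -/
/-!
Common definitions for the formalization of
"Core entropy of polynomials of arbitrary degree" (Gao–Tiozzo).
-/

open Set Metric Filter Topology

attribute [local instance] Classical.propDecidable

noncomputable section

namespace CoreEntropy

/-- The circle `ℝ/ℤ`. -/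
abbrev Circ : Type := AddCircle (1 : ℝ)

/-- The angle `d`-tupling map `θ ↦ d·θ (mod 1)`. -/
def tau (d : ℕ) (θ : Circ) : Circ := d • θ

/-- The embedding of `ℝ/ℤ` into `ℂ` as the unit circle, `θ ↦ e^{2πiθ}`. -/
def pt (θ : Circ) : ℂ := (AddCircle.toCircle θ : ℂ)

/-- The convex hull, inside the closed unit disk, of a finite set of circle points. -/
def hull (ℓ : Finset Circ) : Set ℂ := convexHull ℝ (pt '' (ℓ : Set Circ))

/-- The closed unit disk. -/
def disk : Set ℂ := Metric.closedBall 0 1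

/-- `ℓ` separates the circle points `x` and `y`: they lie in different connected
components of the complement (in the closed unit disk) of the convex hull of `ℓ`. -/
def Separates (ℓ : Finset Circ) (x y : Circ) : Prop :=
  pt x ∈ disk \ hull ℓ ∧ pt y ∈ disk \ hull ℓ ∧
    connectedComponentIn (disk \ hull ℓ) (pt x) ≠ connectedComponentIn (disk \ hull ℓ) (pt y)

/-- A finite collection of finite subsets of the circle. -/
structure Collection where
  s : ℕ
  leaf : Fin s → Finset Circ

/-- `ξ` is a critical portrait of degree `d`. -/
structure IsPortrait (d : ℕ) (ξ : Collection) : Prop where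
  inj : Function.Injective ξ.leaf
  two_le : ∀ k, 2 ≤ (ξ.leaf k).card
  touch : ∀ k l, k ≠ l →
    hull (ξ.leaf k) ∩ hull (ξ.leaf l) = ∅ ∨
      ∃ θ : Circ, hull (ξ.leaf k) ∩ hull (ξ.leaf l) = {pt θ}
  tauConst : ∀ k, ∀ x ∈ ξ.leaf k, ∀ y ∈ ξ.leaf k, tau d x = tau d y
  degree : (∑ k, ((ξ.leaf k).card - 1)) = d - 1

/-- `m` is a primitive major of degree `d`: a critical portrait whose elements have
pairwise disjoint convex hulls. -/
def IsPrimitiveMajor (d : ℕ) (m : Collection) : Prop :=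
  IsPortrait d m ∧ ∀ k l, k ≠ l → Disjoint (hull (m.leaf k)) (hull (m.leaf l))

/-- Two circle points are identified when collapsing each element of `m` to a point. -/
def Collapses (m : Collection) (u v : Circ) : Prop :=
  u = v ∨ ∃ k, u ∈ m.leaf k ∧ v ∈ m.leaf k

/-- The pseudometric `met m` on the circle: the quotient of the arc-length metric of the
circle by the identifications collapsing each element of `m` to a point (infimum of sums of
arc-lengths over chains linked by collapsed pairs). -/
def met (m : Collection) (x y : Circ) : ℝ :=
  sInf { r : ℝ | ∃ n : ℕ, ∃ p q : ℕ → Circ, p 0 = x ∧ q n = y ∧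
    (∀ i < n, Collapses m (q i) (p (i + 1))) ∧
    r = ∑ i ∈ Finset.range (n + 1), dist (p i) (q i) }

/-- Thurston's metric on primitive majors. -/
def md (m m' : Collection) : ℝ :=
  ⨆ x : Circ, ⨆ y : Circ, |met m x y - met m' x y|

/-- Parametrization of the chord from `pt x` to `pt y`. -/
def chord (x y : Circ) (t : ℝ) : ℂ := (1 - t) • pt x + t • pt y

/-- The first parameter at which the chord from `x` to `y` crosses the hull of `ℓ`. -/
def sepKey (ℓ : Finset Circ) (x y : Circ) : ℝ :=
  sInf {t : ℝ | t ∈ Icc (0 : ℝ) 1 ∧ chord x y t ∈ hull ℓ}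

/-- The separation vector of the ordered pair `(x, y)` with respect to `ξ`: the list of
indices of elements of `ξ` separating `x` from `y`, ordered by the crossing order of the
chord from `x` to `y`. -/
def sepList (ξ : Collection) (x y : Circ) : List (Fin ξ.s) :=
  ((Finset.univ.filter fun α => Separates (ξ.leaf α) x y).toList).mergeSort
    (fun α β => decide (sepKey (ξ.leaf α) x y ≤ sepKey (ξ.leaf β) x y))

/-- A chosen vertex of the leaf `ξ.leaf k`. -/
def base (ξ : Collection) (k : Fin ξ.s) : Circ :=
  if h : (ξ.leaf k).Nonempty then h.choose else 0

/-- `x_k(i) = τ^i(ℓ_k)`, the `i`-th forward iterate of the `k`-th leaf (well defined for a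
portrait since `τ` is constant on each leaf). -/
def xpt (d : ℕ) (ξ : Collection) (k : Fin ξ.s) (i : ℕ+) : Circ :=
  (tau d)^[(i : ℕ)] (base ξ k)

/-!  ### Wedges, labeled wedges and their graphs -/

/-- The formal symbols `y_k(i)`, `k ∈ {1,…,s}`, `i ≥ 1`. -/
abbrev Sym (s : ℕ) : Type := Fin s × ℕ+

/-- The wedge of size `s`: unordered pairs of formal symbols. -/
abbrev Vtx (s : ℕ) : Type := Sym2 (Sym s)

/-- A labeled wedge of size `s`: each ordered pair of symbols gets a label, which is either
`∅` (the empty list) or a list of pairwise distinct elements of `{1,…,s}`. -/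
structure LabeledWedge (s : ℕ) where
  label : Sym s → Sym s → List (Fin s)
  nodup : ∀ a b, (label a b).Nodup

/-- Encoding of symbols used to pick a canonical ordered representative of a vertex. -/
def skey {s : ℕ} (p : Sym s) : ℕ := (p.2 : ℕ) * s + (p.1 : ℕ)

lemma skey_injective {s : ℕ} : Function.Injective (skey (s := s)) := by
  rintro ⟨k, i⟩ ⟨l, j⟩ h
  simp only [skey] at h
  have hk : (k : ℕ) < s := k.isLt
  have hl : (l : ℕ) < s := l.isLt
  have h1 : (k : ℕ) = l := by
    have e1 : ((i : ℕ) * s + k) % s = k := by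
      rw [Nat.mul_comm, Nat.mul_add_mod]; exact Nat.mod_eq_of_lt hk
    have e2 : ((j : ℕ) * s + l) % s = l := by
      rw [Nat.mul_comm, Nat.mul_add_mod]; exact Nat.mod_eq_of_lt hl
    rw [← e1, ← e2, h]
  have h2 : (i : ℕ) = (j : ℕ) := by
    have hs : 0 < s := k.pos
    have h3 : (i : ℕ) * s = (j : ℕ) * s := by omega
    exact Nat.eq_of_mul_eq_mul_right hs h3
  exact Prod.ext (Fin.ext h1) (PNat.coe_injective h2)

/-- Canonically ordered pair from an unordered pair. -/
def pick {s : ℕ} (a b : Sym s) : Sym s × Sym s := if skey a ≤ skey b then (a, b) else (b, a)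

lemma pick_comm {s : ℕ} (a b : Sym s) : pick a b = pick b a := by
  unfold pick
  rcases lt_trichotomy (skey a) (skey b) with h | h | h
  · rw [if_pos h.le, if_neg (not_le.mpr h)]
  · have hab : a = b := skey_injective h
    subst hab; simp
  · rw [if_neg (not_le.mpr h), if_pos h.le]

/-- A canonical ordered representative of a vertex of the wedge. -/
def ordRep {s : ℕ} (v : Vtx s) : Sym s × Sym s :=
  Sym2.lift ⟨pick, pick_comm⟩ v

/-- The height `min{i,j}` of the vertex `{y_k(i), y_l(j)}`. -/
def vheight {s : ℕ} (v : Vtx s) : ℕ := min ((ordRep v).1.2 : ℕ) ((ordRep v).2.2 : ℕ)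

/-- The width `max{i,j}` of the vertex `{y_k(i), y_l(j)}`. -/
def vwidth {s : ℕ} (v : Vtx s) : ℕ := max ((ordRep v).1.2 : ℕ) ((ordRep v).2.2 : ℕ)

/-- `y_k(i) ↦ y_k(i+1)`. -/
def succSym {s : ℕ} (p : Sym s) : Sym s := (p.1, p.2 + 1)

/-- The central targets `{y_{α_i}(1), y_{α_{i+1}}(1)}` associated to a label. -/
def centrals {s : ℕ} (L : List (Fin s)) : List (Vtx s) :=
  (L.zip L.tail).map fun q => Sym2.mk (q.1, (1 : ℕ+)) (q.2, (1 : ℕ+))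

/-- The list of targets of the outgoing edges of the vertex with ordered representative
`(a, b)`, in the graph associated to the labeled wedge `W`:
a single upward edge if the label is `∅`, and the `r+1` edges
`{y_k(i+1), y_{α_1}(1)}, {y_{α_1}(1), y_{α_2}(1)}, …, {y_{α_r}(1), y_l(j+1)}`
if the label is `(α_1, …, α_r)`. -/
def targets {s : ℕ} (W : LabeledWedge s) (a b : Sym s) : List (Vtx s) :=
  if h : W.label a b = [] then [Sym2.mk (succSym a) (succSym b)]
  else
    (Sym2.mk (succSym a) ((W.label a b).head h, (1 : ℕ+)) ::
        centrals (W.label a b)) ++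
      [Sym2.mk ((W.label a b).getLast h, (1 : ℕ+)) (succSym b)]

/-- The number of edges from `v` to `w` in the graph associated to a labeled wedge. -/
def numEdges {s : ℕ} (W : LabeledWedge s) (v w : Vtx s) : ℕ :=
  (targets W (ordRep v).1 (ordRep v).2).count w

/-- A directed (multi-)graph: a vertex type together with the number of edges between any
ordered pair of vertices. -/
structure Digraph' where
  V : Type
  E : V → V → ℕ

/-- The graph associated to a labeled wedge. -/
def wedgeGraph {s : ℕ} (W : LabeledWedge s) : Digraph' where
  V := Vtx s
  E := numEdges W

/-- Cyclic successor in `Fin n`. -/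
def cyc {n : ℕ} (i : Fin n) : Fin n := ⟨((i : ℕ) + 1) % n, Nat.mod_lt _ i.pos⟩

/-- The type of closed paths of length `n` in a directed graph: a cyclic sequence of `n`
vertices together with a choice of an edge for each step.  (Closed paths based at different
vertices are different.) -/
def ClosedPaths (G : Digraph') (n : ℕ) : Type :=
  (v : Fin n → G.V) × ((i : Fin n) → Fin (G.E (v i) (v (cyc i))))

/-- `C(Γ, n)`, the number of closed paths of length `n`. -/
def pathCount (G : Digraph') (n : ℕ) : ℕ := Nat.card (ClosedPaths G n)

/-- The growth rate `r(Γ) = limsup C(Γ,n)^{1/n}`. -/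
def growth (G : Digraph') : ℝ :=
  Filter.limsup (fun n : ℕ => (pathCount G n : ℝ) ^ (1 / (n : ℝ))) Filter.atTop

/-- The circle point represented by a formal symbol: `y_k(i) ↦ x_k(i)`. -/
def vpt (d : ℕ) (ξ : Collection) (p : Sym ξ.s) : Circ := xpt d ξ p.1 p.2

/-- The labeled wedge induced by a critical portrait: the ordered pair `(y_k(i), y_l(j))`
is labeled by the separation vector of `(x_k(i), x_l(j))` with respect to `ξ`. -/
def inducedWedge (d : ℕ) (ξ : Collection) : LabeledWedge ξ.s where
  label a b := sepList ξ (vpt d ξ a) (vpt d ξ b)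
  nodup a b := by
    have h1 : (Finset.univ.filter fun α =>
        Separates (ξ.leaf α) (vpt d ξ a) (vpt d ξ b)).toList.Nodup := Finset.nodup_toList _
    exact ((List.mergeSort_perm _ _).nodup_iff).mpr h1

/-- `r(ξ)`, the growth rate of the graph associated to the labeled wedge induced by `ξ`. -/
def growthRate (d : ℕ) (ξ : Collection) : ℝ := growth (wedgeGraph (inducedWedge d ξ))

/-- A vertex is diagonal with respect to `ξ` if its two symbols represent the same circle
point. -/
def Diag (d : ℕ) (ξ : Collection) (v : Vtx ξ.s) : Prop :=
  Sym2.IsDiag (Sym2.map (vpt d ξ) v)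

/-- The set of non-diagonal vertices. -/
def NDSet (d : ℕ) (ξ : Collection) : Set (Vtx ξ.s) := {v | ¬ Diag d ξ v}

/-- The equivalence `≡_ξ` on vertices: they represent the same unordered pair of circle
points. -/
def wEquiv (d : ℕ) (ξ : Collection) (v w : Vtx ξ.s) : Prop :=
  Sym2.map (vpt d ξ) v = Sym2.map (vpt d ξ) w

/-- Restriction of a graph to a set of vertices. -/
def restrict (G : Digraph') (S : Set G.V) : Digraph' where
  V := ↥S
  E v w := G.E v.val w.val

/-- The subgraph `Γ^{ND}` on non-diagonal vertices. -/
def ndGraph (d : ℕ) (ξ : Collection) (W : LabeledWedge ξ.s) : Digraph' :=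
  restrict (wedgeGraph W) (NDSet d ξ)

/-- The setoid `≡_ξ` on non-diagonal vertices. -/
def ndSetoid (d : ℕ) (ξ : Collection) : Setoid ↥(NDSet d ξ) where
  r v w := wEquiv d ξ v.val w.val
  iseqv := ⟨fun _ => rfl, fun h => h.symm, fun h h' => h.trans h'⟩

/-- The quotient graph `Γ^Q = Γ^{ND}/≡_ξ`. -/
def quotGraph (d : ℕ) (ξ : Collection) (W : LabeledWedge ξ.s) : Digraph' where
  V := Quotient (ndSetoid d ξ)
  E c c' := ∑ᶠ u ∈ {u : ↥(NDSet d ξ) | Quotient.mk (ndSetoid d ξ) u = c'},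
      (ndGraph d ξ W).E (Quotient.out c) u

/-- A weak cover of graphs: surjective on vertices and a bijection on outgoing edges. -/
structure IsWeakCover (G₁ G₂ : Digraph') (π : G₁.V → G₂.V) : Prop where
  surj : Function.Surjective π
  edges : ∀ v w', G₂.E (π v) w' = ∑ᶠ w ∈ {w | π w = w'}, G₁.E v w

/-- A labeled wedge is weakly periodic of type `ξ`. -/
def WeaklyPeriodic (d : ℕ) (ξ : Collection) (W : LabeledWedge ξ.s) : Prop :=
  (∀ a b : Sym ξ.s, ∃ B C : List (Fin ξ.s),
      W.label a b = B ++ sepList ξ (vpt d ξ a) (vpt d ξ b) ++ C ∧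
      (∀ β ∈ B, vpt d ξ a ∈ ξ.leaf β) ∧ (∀ γ ∈ C, vpt d ξ b ∈ ξ.leaf γ)) ∧
  (∀ a b b' : Sym ξ.s, vpt d ξ b = vpt d ξ b' →
      ∃ B C C' : List (Fin ξ.s),
        W.label a b = B ++ sepList ξ (vpt d ξ a) (vpt d ξ b) ++ C ∧
        W.label a b' = B ++ sepList ξ (vpt d ξ a) (vpt d ξ b') ++ C' ∧
        (∀ β ∈ B, vpt d ξ a ∈ ξ.leaf β) ∧
        (∀ γ ∈ C, vpt d ξ b ∈ ξ.leaf γ) ∧ (∀ γ ∈ C', vpt d ξ b' ∈ ξ.leaf γ)) ∧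
  (∀ a a' b : Sym ξ.s, vpt d ξ a = vpt d ξ a' →
      ∃ B B' C : List (Fin ξ.s),
        W.label a b = B ++ sepList ξ (vpt d ξ a) (vpt d ξ b) ++ C ∧
        W.label a' b = B' ++ sepList ξ (vpt d ξ a') (vpt d ξ b) ++ C ∧
        (∀ γ ∈ C, vpt d ξ b ∈ ξ.leaf γ) ∧
        (∀ β ∈ B, vpt d ξ a ∈ ξ.leaf β) ∧ (∀ β ∈ B', vpt d ξ a' ∈ ξ.leaf β))

/-- Hausdorff convergence of a sequence of collections to `ξ`, with the matching of leaves
given by the bijections `e n`. -/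
def HConvWith (ξn : ℕ → Collection) (ξ : Collection) (N₀ : ℕ)
    (e : (n : ℕ) → N₀ ≤ n → (Fin (ξn n).s ≃ Fin ξ.s)) : Prop :=
  ∀ k : Fin ξ.s, ∀ ε > (0 : ℝ), ∃ M : ℕ, ∀ n, ∀ hn : N₀ ≤ n, M ≤ n →
    Metric.hausdorffDist (hull ((ξn n).leaf ((e n hn).symm k))) (hull (ξ.leaf k)) < ε

/-- Hausdorff convergence of a sequence of collections. -/
def HConv (ξn : ℕ → Collection) (ξ : Collection) : Prop :=
  ∃ N₀ e, HConvWith ξn ξ N₀ e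

/-- Two leaves touch if their hulls intersect. -/
def touchRel (ξ : Collection) (k l : Fin ξ.s) : Prop :=
  (hull (ξ.leaf k) ∩ hull (ξ.leaf l)).Nonempty

/-- `m` is the primitive major induced by `ξ`: its leaves are the unions of the vertex
sets of the classes of the equivalence generated by intersection of hulls. -/
def InducesMajor (ξ m : Collection) : Prop :=
  ∃ c : Fin ξ.s → Fin m.s, Function.Surjective c ∧
    (∀ k l, c k = c l ↔ Relation.EqvGen (touchRel ξ) k l) ∧
    ∀ t : Fin m.s, m.leaf t = (Finset.univ.filter fun k => c k = t).biUnion ξ.leaf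

/-- The equivalence relation induced by a critical portrait on the circle. -/
def circRel (ξ : Collection) : Circ → Circ → Prop :=
  Relation.EqvGen fun x y => ∃ k, x ∈ ξ.leaf k ∧ y ∈ ξ.leaf k

/-- Relabeling of a labeled wedge along a bijection of `{1,…,s}`. -/
def LabeledWedge.permute {s s' : ℕ} (σ : Fin s ≃ Fin s') (W : LabeledWedge s) :
    LabeledWedge s' where
  label a b := (W.label (σ.symm a.1, a.2) (σ.symm b.1, b.2)).map σ
  nodup a b := (W.nodup _ _).map σ.injective

/-- Convergence of a sequence of labeled wedges defined for `n ≥ N₀`. -/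
def WedgeTendstoFrom {s : ℕ} (N₀ : ℕ) (Wn : (n : ℕ) → N₀ ≤ n → LabeledWedge s)
    (W : LabeledWedge s) : Prop :=
  ∀ S : Finset (Sym s × Sym s), ∃ M : ℕ, ∀ n, ∀ hn : N₀ ≤ n, M ≤ n →
    ∀ p ∈ S, (Wn n hn).label p.1 p.2 = W.label p.1 p.2

/-- Convergence of a sequence of labeled wedges: on each finite set of vertices the labels
are eventually those of the limit. -/
def WedgeTendsto {s : ℕ} (Wn : ℕ → LabeledWedge s) (W : LabeledWedge s) : Prop :=
  ∀ S : Finset (Sym s × Sym s), ∃ M : ℕ, ∀ n, M ≤ n →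
    ∀ p ∈ S, (Wn n).label p.1 p.2 = W.label p.1 p.2

/-- A rational circle point. -/
def RatPoint (θ : Circ) : Prop := ∃ q : ℚ, θ = ((q : ℝ) : Circ)

/-- A rational collection: all angles of all leaves are rational. -/
def IsRational (ξ : Collection) : Prop := ∀ k, ∀ θ ∈ ξ.leaf k, RatPoint θ

/-! ### Thurston's entropy algorithm -/

/-- The postcritical set `P(ξ) = {x_k(i) : k, i ≥ 1}`. -/
def Pset (d : ℕ) (ξ : Collection) : Set Circ := {θ | ∃ k i, θ = xpt d ξ k i}

/-- The set `O_ξ` of unordered pairs of distinct points of `P(ξ)` (or the single pair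
`{x,x}` if `P(ξ) = {x}`). -/
def OSet (d : ℕ) (ξ : Collection) : Set (Sym2 Circ) :=
  {p | ∃ x y, x ∈ Pset d ξ ∧ y ∈ Pset d ξ ∧ p = Sym2.mk x y ∧
        (x ≠ y ∨ ∀ z ∈ Pset d ξ, z = x)}

/-- Basis vector of the free vector space on `O_ξ` (zero if the pair is not in `O_ξ`). -/
def sngl (d : ℕ) (ξ : Collection) (p : Sym2 Circ) : ↥(OSet d ξ) →₀ ℝ :=
  if h : p ∈ OSet d ξ then Finsupp.single ⟨p, h⟩ 1 else 0

/-- The chain `τ(x), τ(ℓ_{α_1}), …, τ(ℓ_{α_r}), τ(y)` associated to a pair `(x,y)` with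
separation vector `(α_1, …, α_r)`. -/
def chainList (d : ℕ) (ξ : Collection) (x y : Circ) : List Circ :=
  (tau d x :: (sepList ξ x y).map fun α => xpt d ξ α 1) ++ [tau d y]

/-- The image of the basis vector `{x,y}` under Thurston's transition operator. -/
def algImage (d : ℕ) (ξ : Collection) (x y : Circ) : ↥(OSet d ξ) →₀ ℝ :=
  if ∃ k, x ∈ ξ.leaf k ∧ y ∈ ξ.leaf k then 0
  else (((chainList d ξ x y).zip (chainList d ξ x y).tail).map
      fun q => sngl d ξ (Sym2.mk q.1 q.2)).sum

/-- Thurston's transition operator `A_ξ` on the free vector space with basis `O_ξ`. -/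
def AxiEnd (d : ℕ) (ξ : Collection) : Module.End ℝ (↥(OSet d ξ) →₀ ℝ) :=
  Finsupp.lift (↥(OSet d ξ) →₀ ℝ) ℝ ↥(OSet d ξ)
    (fun p => algImage d ξ (Quot.out p.val).1 (Quot.out p.val).2)

/-- The leading nonnegative eigenvalue `ρ(ξ)` of `A_ξ`. -/
def rho (d : ℕ) (ξ : Collection) : ℝ :=
  sSup {t : ℝ | 0 ≤ t ∧ Module.End.HasEigenvalue (AxiEnd d ξ) t}

/-- The core entropy `h(ξ) = log ρ(ξ)` given by Thurston's algorithm. -/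
def coreEntropy (d : ℕ) (ξ : Collection) : ℝ := Real.log (rho d ξ)

/-! ### Multicycles and the spectral determinant -/

/-- An edge instance of a multigraph: a pair of vertices together with the index of one of
the edges between them. -/
def EdgeInst (G : Digraph') : Type := {e : G.V × G.V × ℕ // e.2.2 < G.E e.1 e.2.1}

/-- Source of an edge. -/
def esrc {G : Digraph'} (e : EdgeInst G) : G.V := e.val.1

/-- Target of an edge. -/
def etgt {G : Digraph'} (e : EdgeInst G) : G.V := e.val.2.1

/-- A finite edge set is a (simple) multicycle iff every vertex has at most one outgoing
and at most one incoming edge in it, and the sets of sources and targets agree: such a set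
is exactly a disjoint union of simple cycles. -/
def IsMulticycle (G : Digraph') (F : Finset (EdgeInst G)) : Prop :=
  (∀ e₁ ∈ F, ∀ e₂ ∈ F, esrc e₁ = esrc e₂ → e₁ = e₂) ∧
  (∀ e₁ ∈ F, ∀ e₂ ∈ F, etgt e₁ = etgt e₂ → e₁ = e₂) ∧
  (∀ v : G.V, (∃ e ∈ F, esrc e = v) ↔ ∃ e ∈ F, etgt e = v)

/-- The number of connected components (simple cycles) of a multicycle. -/
def numComponents (G : Digraph') (F : Finset (EdgeInst G)) : ℕ :=
  Nat.card (Quot fun a b : {v : G.V // ∃ e ∈ F, esrc e = v} =>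
    ∃ e ∈ F, esrc e = a.val ∧ etgt e = b.val)

/-- A simple cycle: a connected multicycle. -/
def IsSimpleCycle (G : Digraph') (F : Finset (EdgeInst G)) : Prop :=
  IsMulticycle G F ∧ numComponents G F = 1

/-- A graph has bounded cycles: bounded outgoing degree and finitely many simple cycles of
each length. -/
def HasBoundedCycles (G : Digraph') : Prop :=
  (∃ D : ℕ, ∀ v, (∑ᶠ w, G.E v w) ≤ D) ∧
  ∀ n : ℕ, {F : Finset (EdgeInst G) | IsSimpleCycle G F ∧ F.card = n}.Finite

/-- The `n`-th coefficient `Σ_{γ multicycle of length n} (-1)^{C(γ)}` of the spectral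
determinant. -/
def specCoeff (G : Digraph') (n : ℕ) : ℤ :=
  ∑ᶠ F ∈ {F : Finset (EdgeInst G) | IsMulticycle G F ∧ F.card = n},
    (-1 : ℤ) ^ numComponents G F

/-- The spectral determinant `P(z) = Σ_γ (-1)^{C(γ)} z^{ℓ(γ)}`. -/
def specDet (G : Digraph') (z : ℂ) : ℂ := ∑' n : ℕ, (specCoeff G n : ℂ) * z ^ n

/-- Paths of length `n` from `v₀` to `v₀`. -/
def BasedPaths (G : Digraph') (v₀ : G.V) (n : ℕ) : Type :=
  {p : Σ v : Fin (n + 1) → G.V, (i : Fin n) → Fin (G.E (v i.castSucc) (v i.succ)) //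
    p.1 0 = v₀ ∧ p.1 (Fin.last n) = v₀}

end CoreEntropy

/-!
Collapsing the elements of a primitive major `m` gives the pseudometric `met m`, and a chain
computing `met m x y` may be taken to pass through each element of `m` at most once. Hence if
every element of `m` has `met m'`-diameter at most `δ`, then `met m' ≤ met m + #m · δ`, and
`md m m'` is small as soon as the elements of each major are small for the other's pseudometric.

For the majors induced by Hausdorff-convergent portraits `ξ_n → ξ` this holds in both directions.
A unit vector close to the convex hull of finitely many circle points is close to one of them, so
the vertices of the leaves of `ξ` and of `ξ_n` eventually approximate each other. An element of
`m` is a chain of leaves of `ξ` meeting at common vertices, each of them eventually small for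
`met m_n`. Conversely, disjoint hulls stay disjoint under small perturbations, so touching leaves
of `ξ_n` approximate touching leaves of `ξ`, and the elements of `m_n` are eventually small for
`met m`.
-/

lemma Relation.EqvGen.map {α β : Type*} {r : α → α → Prop} {r' : β → β → Prop} (f : α → β)
    (hf : ∀ a b, r a b → r' (f a) (f b)) {a b : α} (h : Relation.EqvGen r a b) :
    Relation.EqvGen r' (f a) (f b) := by
  induction h with
  | rel a b h => exact .rel _ _ (hf a b h)
  | refl a => exact .refl _
  | symm a b _ ih => exact .symm _ _ ih
  | trans a b c _ _ ih₁ ih₂ => exact .trans _ _ _ ih₁ ih₂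

namespace CoreEntropy

lemma norm_pt (θ : Circ) : ‖pt θ‖ = 1 := Circle.norm_coe _

lemma pt_injective : Function.Injective pt :=
  Subtype.val_injective.comp (AddCircle.injective_toCircle one_ne_zero)

lemma pt_mem_hull {ℓ : Finset Circ} {θ : Circ} (h : θ ∈ ℓ) : pt θ ∈ hull ℓ :=
  subset_convexHull ℝ _ (mem_image_of_mem pt h)

lemma isCompact_hull (ℓ : Finset Circ) : IsCompact (hull ℓ) :=
  (ℓ.finite_toSet.image pt).isCompact_convexHull ℝ

lemma hausdorffEDist_hull_ne_top {ℓ ℓ' : Finset Circ} (h : ℓ.Nonempty) (h' : ℓ'.Nonempty) :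
    hausdorffEDist (hull ℓ) (hull ℓ') ≠ ⊤ :=
  hausdorffEDist_ne_top_of_nonempty_of_bounded ⟨_, pt_mem_hull h.choose_spec⟩
    ⟨_, pt_mem_hull h'.choose_spec⟩ (isCompact_hull ℓ).isBounded (isCompact_hull ℓ').isBounded

/-- Maximizing the linear functional `⟪w, ·⟫` over the hull picks out a vertex. -/
lemma exists_mem_norm_sub_pt_sq_le {ℓ : Finset Circ} {w z : ℂ} (hw : ‖w‖ = 1)
    (hz : z ∈ hull ℓ) : ∃ u ∈ ℓ, ‖w - pt u‖ ^ 2 ≤ 2 * ‖w - z‖ := by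
  obtain ⟨_, ⟨u, hu, rfl⟩, hzu⟩ :=
    ((innerₗ ℂ w).convexOn convex_univ).exists_ge_of_mem_convexHull (subset_univ _) hz
  refine ⟨u, hu, ?_⟩
  have hcs : inner ℝ w (w - z) ≤ ‖w - z‖ := by
    simpa [hw] using real_inner_le_norm w (w - z)
  simp only [innerₗ_apply_apply] at hzu
  rw [norm_sub_sq_real, hw, norm_pt]
  rw [inner_sub_right, real_inner_self_eq_norm_sq, hw] at hcs
  linarith

lemma mem_of_pt_mem_hull {ℓ : Finset Circ} {θ : Circ} (h : pt θ ∈ hull ℓ) : θ ∈ ℓ := by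
  obtain ⟨u, hu, hθu⟩ := exists_mem_norm_sub_pt_sq_le (norm_pt θ) h
  rw [sub_self, norm_zero, mul_zero, sq_nonpos_iff, norm_eq_zero, sub_eq_zero]
    at hθu
  rwa [pt_injective hθu]

/-- Uniform continuity of the inverse of the homeomorphism between `ℝ/ℤ` and the compact unit
circle. -/
lemma exists_pos_dist_lt_of_norm_pt_sub_lt {η : ℝ} (hη : 0 < η) :
    ∃ ρ > 0, ∀ θ θ' : Circ, ‖pt θ - pt θ'‖ < ρ → dist θ θ' < η := by
  set h := AddCircle.homeomorphCircle (one_ne_zero : (1 : ℝ) ≠ 0)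
  obtain ⟨ρ, hρ, hh⟩ := Metric.uniformContinuous_iff.1
    (CompactSpace.uniformContinuous_of_continuous h.symm.continuous) η hη
  refine ⟨ρ, hρ, fun θ θ' hθ => ?_⟩
  simpa using @hh (h θ) (h θ') (by
    change dist ((h θ : Circle) : ℂ) (h θ') < ρ
    rwa [dist_eq_norm, AddCircle.homeomorphCircle_apply, AddCircle.homeomorphCircle_apply])

lemma exists_pos_forall_exists_dist_lt {η : ℝ} (hη : 0 < η) :
    ∃ ρ > 0, ∀ ℓ ℓ' : Finset Circ, ℓ.Nonempty → ℓ'.Nonempty →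
      hausdorffDist (hull ℓ) (hull ℓ') < ρ → ∀ θ ∈ ℓ, ∃ θ' ∈ ℓ', dist θ θ' < η := by
  obtain ⟨ρ, hρ, hchord⟩ := exists_pos_dist_lt_of_norm_pt_sub_lt hη
  refine ⟨ρ ^ 2 / 2, by positivity, fun ℓ ℓ' h h' hH θ hθ => ?_⟩
  obtain ⟨z, hz, hθz⟩ := exists_dist_lt_of_hausdorffDist_lt (pt_mem_hull hθ) hH
    (hausdorffEDist_hull_ne_top h h')
  obtain ⟨u, hu, hθu⟩ := exists_mem_norm_sub_pt_sq_le (norm_pt θ) hz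
  refine ⟨u, hu, hchord θ u (lt_of_pow_lt_pow_left₀ 2 hρ.le ?_)⟩
  rw [dist_eq_norm] at hθz
  linarith

section Met

variable (m : Collection)

lemma met_le_chain {n : ℕ} {p q : ℕ → Circ} (hc : ∀ i < n, Collapses m (q i) (p (i + 1))) :
    met m (p 0) (q n) ≤ ∑ i ∈ Finset.range (n + 1), dist (p i) (q i) :=
  csInf_le ⟨0, by rintro r ⟨n, p, q, -, -, -, rfl⟩; positivity⟩ ⟨n, p, q, rfl, rfl, hc, rfl⟩

lemma le_met {a : ℝ} {x y : Circ} (h : ∀ n (p q : ℕ → Circ), p 0 = x → q n = y →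
    (∀ i < n, Collapses m (q i) (p (i + 1))) → a ≤ ∑ i ∈ Finset.range (n + 1), dist (p i) (q i)) :
    a ≤ met m x y := by
  refine le_csInf ⟨dist x y, 0, fun _ => x, fun _ => y, rfl, rfl, by simp, by simp⟩ ?_
  rintro r ⟨n, p, q, hp, hq, hc, rfl⟩
  exact h n p q hp hq hc

lemma met_nonneg (x y : Circ) : 0 ≤ met m x y :=
  le_met m fun _ _ _ _ _ _ => by positivity

lemma met_le_dist (x y : Circ) : met m x y ≤ dist x y := by
  simpa using met_le_chain m (n := 0) (p := fun _ => x) (q := fun _ => y) (by simp)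

lemma met_eq_zero_of_collapses {u v : Circ} (h : Collapses m u v) : met m u v = 0 := by
  refine le_antisymm ?_ (met_nonneg m u v)
  simpa [Finset.sum_range_succ] using met_le_chain m (n := 1)
    (p := fun i => if i = 0 then u else v) (q := fun i => if i = 0 then u else v) (by simpa)

/-- Two chains are concatenated by an identity jump at their common endpoint. -/
lemma met_triangle (x y z : Circ) : met m x z ≤ met m x y + met m y z := by
  rw [← sub_le_iff_le_add]
  refine le_met m fun n₁ p₁ q₁ hp₁ hq₁ hc₁ => ?_
  rw [sub_le_comm]
  refine le_met m fun n₂ p₂ q₂ hp₂ hq₂ hc₂ => ?_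
  set p : ℕ → Circ := fun i => if i ≤ n₁ then p₁ i else p₂ (i - (n₁ + 1))
  set q : ℕ → Circ := fun i => if i ≤ n₁ then q₁ i else q₂ (i - (n₁ + 1))
  have hc : ∀ i < n₁ + 1 + n₂, Collapses m (q i) (p (i + 1)) := by
    intro i hi
    rcases lt_trichotomy i n₁ with h | rfl | h
    · simpa [p, q, h.le, Nat.succ_le_of_lt h] using hc₁ i h
    · simp [p, q, hq₁, hp₂, Collapses]
    · have := hc₂ (i - (n₁ + 1)) (by omega)
      simp only [p, q, not_le.2 h, not_le.2 (h.trans (Nat.lt_succ_self i)), if_false]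
      rwa [show i + 1 - (n₁ + 1) = i - (n₁ + 1) + 1 by omega]
  have hchain := met_le_chain m hc
  have hsum : ∑ i ∈ Finset.range (n₁ + 1 + n₂ + 1), dist (p i) (q i) =
      ∑ i ∈ Finset.range (n₁ + 1), dist (p₁ i) (q₁ i) +
        ∑ i ∈ Finset.range (n₂ + 1), dist (p₂ i) (q₂ i) := by
    rw [add_assoc, Finset.sum_range_add]
    congr 1
    · exact Finset.sum_congr rfl fun i hi => by
        simp [p, q, Nat.lt_succ_iff.1 (Finset.mem_range.1 hi)]
    · exact Finset.sum_congr rfl fun i _ => by simp [p, q, show ¬ n₁ + 1 + i ≤ n₁ by omega]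
  simp only [p, q, if_pos (Nat.zero_le n₁)] at hchain
  rw [hsum, hp₁, if_neg (by omega), show n₁ + 1 + n₂ - (n₁ + 1) = n₂ by omega, hq₂] at hchain
  linarith

end Met

section Transfer

def LeafDiamLE (m m' : Collection) (δ : ℝ) : Prop :=
  ∀ t, ∀ u ∈ m.leaf t, ∀ v ∈ m.leaf t, met m' u v ≤ δ

variable {m m' : Collection} {δ : ℝ}

/-- If the first jump of the chain is through the element `k`, jump directly from there to the last
visit of `k` and recurse on the rest of the chain, which avoids `k`. -/
lemma met_le_sum_add_card_mul (hδ : 0 ≤ δ) (hm : LeafDiamLE m m' δ) (n : ℕ) :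
    ∀ (T : Finset (Fin m.s)) (p q : ℕ → Circ),
      (∀ i < n, q i = p (i + 1) ∨ ∃ k ∈ T, q i ∈ m.leaf k ∧ p (i + 1) ∈ m.leaf k) →
      met m' (p 0) (q n) ≤ ∑ i ∈ Finset.range (n + 1), dist (p i) (q i) + T.card * δ := by
  induction n using Nat.strong_induction_on with
  | _ n ih =>
  intro T p q hc
  have hTδ : 0 ≤ (T.card : ℝ) * δ := by positivity
  cases n with
  | zero => simpa using (met_le_dist m' (p 0) (q 0)).trans (le_add_of_nonneg_right hTδ)
  | succ n =>
  have htri := met_triangle m' (p 0) (q 0) (q (n + 1))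
  have hfirst := met_le_dist m' (p 0) (q 0)
  rcases hc 0 n.succ_pos with h0 | ⟨k, hkT, hk⟩
  · have hrest := ih n n.lt_succ_self T (fun i => p (i + 1)) (fun i => q (i + 1))
      fun i hi => hc (i + 1) (by omega)
    rw [Finset.sum_range_succ']
    rw [← h0] at hrest
    linarith
  · obtain ⟨j, hj, hjn, hjmax⟩ : ∃ j, (q j ∈ m.leaf k ∧ p (j + 1) ∈ m.leaf k) ∧ j ≤ n ∧
        ∀ i, j < i → i ≤ n → ¬ (q i ∈ m.leaf k ∧ p (i + 1) ∈ m.leaf k) :=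
      ⟨_, Nat.findGreatest_spec (P := fun i => q i ∈ m.leaf k ∧ p (i + 1) ∈ m.leaf k)
        (Nat.zero_le n) hk, Nat.findGreatest_le n,
        fun i => Nat.findGreatest_is_greatest⟩
    have hrest := ih (n - j) (by omega) (T.erase k) (fun i => p (j + 1 + i))
      (fun i => q (j + 1 + i)) fun i hi => by
        rcases hc (j + 1 + i) (by omega) with h | ⟨k', hk'T, hk'⟩
        · exact Or.inl h
        · refine Or.inr ⟨k', Finset.mem_erase.2 ⟨?_, hk'T⟩, hk'⟩
          rintro rfl
          exact hjmax _ (by omega) (by omega) hk'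
    simp only [show j + 1 + (n - j) = n + 1 by omega, add_zero] at hrest
    have hjump := hm k _ hk.1 _ hj.2
    have htri' := met_triangle m' (q 0) (p (j + 1)) (q (n + 1))
    have hsplit : ∑ i ∈ Finset.range (n + 1 + 1), dist (p i) (q i) =
        ∑ i ∈ Finset.range (j + 1), dist (p i) (q i) +
          ∑ i ∈ Finset.range (n - j + 1), dist (p (j + 1 + i)) (q (j + 1 + i)) := by
      rw [← Finset.sum_range_add]
      congr 2
      omega
    have hhead : dist (p 0) (q 0) ≤ ∑ i ∈ Finset.range (j + 1), dist (p i) (q i) :=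
      Finset.single_le_sum (f := fun i => dist (p i) (q i)) (fun _ _ => dist_nonneg)
        (Finset.mem_range.2 j.succ_pos)
    have hcard : ((T.erase k).card : ℝ) + 1 = T.card := by
      exact_mod_cast Finset.card_erase_add_one hkT
    rw [hsplit, ← hcard]
    linarith

lemma met_le_met_add (hδ : 0 ≤ δ) (hm : LeafDiamLE m m' δ) (x y : Circ) :
    met m' x y ≤ met m x y + m.s * δ := by
  rw [← sub_le_iff_le_add]
  refine le_met m fun n p q hp hq hc => ?_
  have h := met_le_sum_add_card_mul hδ hm n Finset.univ p q fun i hi => by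
    rcases hc i hi with h | ⟨k, hk⟩
    · exact Or.inl h
    · exact Or.inr ⟨k, Finset.mem_univ k, hk⟩
  rw [Finset.card_univ, Fintype.card_fin, hp, hq] at h
  linarith

end Transfer

lemma tendsto_nhds_zero_of_eventually_le {α : Type*} {l : Filter α} {f : α → ℝ}
    (h0 : ∀ a, 0 ≤ f a) (h : ∀ ε > 0, ∀ᶠ a in l, f a ≤ ε) : Tendsto f l (𝓝 0) :=
  tendsto_order.2 ⟨fun _ hb => Eventually.of_forall fun a => hb.trans_le (h0 a),
    fun _ hb => (h _ (half_pos hb)).mono fun _ ha => ha.trans_lt (half_lt_self hb)⟩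

lemma md_nonneg (m m' : Collection) : 0 ≤ md m m' :=
  Real.iSup_nonneg fun _ => Real.iSup_nonneg fun _ => abs_nonneg _

lemma md_le_of_leafDiamLE {m m' : Collection} {δ : ℝ} {S : ℕ} (hδ : 0 ≤ δ) (hS : m.s ≤ S)
    (hS' : m'.s ≤ S) (h : LeafDiamLE m m' δ) (h' : LeafDiamLE m' m δ) : md m' m ≤ S * δ := by
  have hmS : (m.s : ℝ) * δ ≤ S * δ := by gcongr
  have hmS' : (m'.s : ℝ) * δ ≤ S * δ := by gcongr
  refine ciSup_le fun x => ciSup_le fun y => abs_sub_le_iff.2 ⟨?_, ?_⟩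
  · linarith [met_le_met_add hδ h x y]
  · linarith [met_le_met_add hδ h' x y]

lemma tendsto_md_of_leafDiamLE {mn : ℕ → Collection} {m : Collection} {S : ℕ}
    (hS : ∀ n, (mn n).s ≤ S) (hmS : m.s ≤ S)
    (h : ∀ δ > 0, ∀ᶠ n in atTop, LeafDiamLE m (mn n) δ)
    (h' : ∀ δ > 0, ∀ᶠ n in atTop, LeafDiamLE (mn n) m δ) :
    Tendsto (fun n => md (mn n) m) atTop (𝓝 0) := by
  refine tendsto_nhds_zero_of_eventually_le (fun n => md_nonneg _ _) fun ε hε => ?_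
  have hδ : 0 < ε / (S + 1) := by positivity
  filter_upwards [h _ hδ, h' _ hδ] with n hn hn'
  calc md (mn n) m ≤ S * (ε / (S + 1)) := md_le_of_leafDiamLE hδ.le hmS (hS n) hn hn'
    _ ≤ ε := by
      rw [mul_div_assoc', div_le_iff₀ (by positivity)]
      nlinarith


section Majors

variable {d : ℕ} {ξ m : Collection}

lemma IsPortrait.leaf_nonempty (hξ : IsPortrait d ξ) (k : Fin ξ.s) : (ξ.leaf k).Nonempty :=
  Finset.card_pos.1 (by have := hξ.two_le k; omega)

lemma IsPortrait.exists_mem_leaf_mem_leaf (hξ : IsPortrait d ξ) {k l : Fin ξ.s} (hkl : k ≠ l)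
    (h : touchRel ξ k l) : ∃ θ, θ ∈ ξ.leaf k ∧ θ ∈ ξ.leaf l := by
  rcases hξ.touch k l hkl with he | ⟨θ, hθ⟩
  · rw [touchRel, he] at h
    exact absurd h Set.not_nonempty_empty
  · have hmem : pt θ ∈ hull (ξ.leaf k) ∩ hull (ξ.leaf l) := hθ ▸ rfl
    exact ⟨θ, mem_of_pt_mem_hull hmem.1, mem_of_pt_mem_hull hmem.2⟩

instance touchRel_symm (ξ : Collection) : Std.Symm (touchRel ξ) :=
  ⟨fun _ _ ⟨z, hz⟩ => ⟨z, hz.2, hz.1⟩⟩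

lemma InducesMajor.s_le (h : InducesMajor ξ m) : m.s ≤ ξ.s := by
  obtain ⟨c, hc, -, -⟩ := h
  simpa using Fintype.card_le_of_surjective c hc

lemma InducesMajor.collapses (h : InducesMajor ξ m) {k l : Fin ξ.s} {u v : Circ}
    (hu : u ∈ ξ.leaf k) (hv : v ∈ ξ.leaf l) (hkl : Relation.EqvGen (touchRel ξ) k l) :
    Collapses m u v := by
  obtain ⟨c, -, hc, hleaf⟩ := h
  refine Or.inr ⟨c k, ?_, ?_⟩ <;> rw [hleaf] <;> refine Finset.mem_biUnion.2 ⟨_, ?_, ‹_›⟩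
  · simp
  · simp [(hc k l).2 hkl]

lemma InducesMajor.exists_eqvGen_of_mem_leaf (h : InducesMajor ξ m) {t : Fin m.s} {u v : Circ}
    (hu : u ∈ m.leaf t) (hv : v ∈ m.leaf t) :
    ∃ k l, u ∈ ξ.leaf k ∧ v ∈ ξ.leaf l ∧ Relation.EqvGen (touchRel ξ) k l := by
  obtain ⟨c, -, hc, hleaf⟩ := h
  rw [hleaf] at hu hv
  obtain ⟨k, hk, hu⟩ := Finset.mem_biUnion.1 hu
  obtain ⟨l, hl, hv⟩ := Finset.mem_biUnion.1 hv
  exact ⟨k, l, hu, hv,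
    (hc k l).1 ((Finset.mem_filter.1 hk).2.trans (Finset.mem_filter.1 hl).2.symm)⟩

end Majors

lemma eventually_disjoint_of_tendsto_hausdorffDist {X ι : Type*} [MetricSpace X] {l : Filter ι}
    {A B : Set X} {A' B' : ι → Set X} (hA : IsCompact A) (hB : IsCompact B) (hAB : Disjoint A B)
    (hA' : ∀ i, hausdorffEDist (A' i) A ≠ ⊤) (hB' : ∀ i, hausdorffEDist (B' i) B ≠ ⊤)
    (hAA' : Tendsto (fun i => hausdorffDist (A' i) A) l (𝓝 0))
    (hBB' : Tendsto (fun i => hausdorffDist (B' i) B) l (𝓝 0)) :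
    ∀ᶠ i in l, Disjoint (A' i) (B' i) := by
  obtain ⟨δ, hδ, hdisj⟩ := hAB.exists_thickenings hA hB.isClosed
  filter_upwards [hAA'.eventually (gt_mem_nhds hδ), hBB'.eventually (gt_mem_nhds hδ)]
    with i hA'i hB'i
  refine hdisj.mono (fun x hx => ?_) fun x hx => ?_
  · exact mem_thickening_iff.2 (exists_dist_lt_of_hausdorffDist_lt hx hA'i (hA' i))
  · exact mem_thickening_iff.2 (exists_dist_lt_of_hausdorffDist_lt hx hB'i (hB' i))

section Convergence

def VerticesNear (ξ ξ' : Collection) (σ : Fin ξ.s → Fin ξ'.s) (η : ℝ) : Prop :=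
  ∀ k, ∀ u ∈ ξ.leaf k, ∃ u' ∈ ξ'.leaf (σ k), dist u u' < η

lemma met_le_of_verticesNear {ξ ξ' m' : Collection} {σ : Fin ξ.s → Fin ξ'.s} {η : ℝ}
    (hm' : InducesMajor ξ' m') (hσ : VerticesNear ξ ξ' σ η) {k l : Fin ξ.s} {u v : Circ}
    (hu : u ∈ ξ.leaf k) (hv : v ∈ ξ.leaf l) (hkl : Relation.EqvGen (touchRel ξ') (σ k) (σ l)) :
    met m' u v ≤ 2 * η := by
  obtain ⟨u', hu', huu'⟩ := hσ k u hu
  obtain ⟨v', hv', hvv'⟩ := hσ l v hv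
  calc met m' u v ≤ met m' u u' + (met m' u' v' + met m' v' v) :=
        (met_triangle m' u u' v).trans (add_le_add_right (met_triangle m' u' v' v) _)
    _ ≤ dist u u' + (0 + dist v' v) := by
        gcongr
        · exact met_le_dist m' u u'
        · exact (met_eq_zero_of_collapses m' (hm'.collapses hu' hv' hkl)).le
        · exact met_le_dist m' v' v
    _ ≤ 2 * η := by rw [dist_comm v']; linarith

def HConvAlong (ξn : ℕ → Collection) (ξ : Collection) (e : ∀ n, Fin (ξn n).s ≃ Fin ξ.s) : Prop :=
  ∀ k, Tendsto (fun n => hausdorffDist (hull ((ξn n).leaf ((e n).symm k))) (hull (ξ.leaf k)))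
    atTop (𝓝 0)

variable {ξn : ℕ → Collection} {ξ : Collection} {e : ∀ n, Fin (ξn n).s ≃ Fin ξ.s}

lemma eventually_verticesNear (hne : ∀ n a, ((ξn n).leaf a).Nonempty)
    (hξne : ∀ k, (ξ.leaf k).Nonempty) (hH : HConvAlong ξn ξ e) {η : ℝ} (hη : 0 < η) :
    ∀ᶠ n in atTop, VerticesNear ξ (ξn n) (e n).symm η ∧ VerticesNear (ξn n) ξ (e n) η := by
  obtain ⟨ρ, hρ, hnear⟩ := exists_pos_forall_exists_dist_lt hη
  filter_upwards [eventually_all.2 fun k => (hH k).eventually (gt_mem_nhds hρ)] with n hn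
  refine ⟨fun k u hu => hnear _ _ (hξne k) (hne n _) ?_ u hu, fun a u hu => ?_⟩
  · rw [hausdorffDist_comm]
    exact hn k
  · have := hn (e n a)
    rw [Equiv.symm_apply_apply] at this
    exact hnear _ _ (hne n a) (hξne _) this u hu

lemma eventually_touchRel_imp (hne : ∀ n a, ((ξn n).leaf a).Nonempty)
    (hξne : ∀ k, (ξ.leaf k).Nonempty) (hH : HConvAlong ξn ξ e) :
    ∀ᶠ n in atTop, ∀ a b, touchRel (ξn n) a b → touchRel ξ (e n a) (e n b) := by
  have hsep : ∀ k l, ∀ᶠ n in atTop, ¬ touchRel ξ k l →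
      ¬ touchRel (ξn n) ((e n).symm k) ((e n).symm l) := by
    intro k l
    by_cases hkl : touchRel ξ k l
    · exact Eventually.of_forall fun _ h => absurd hkl h
    · have hdisj : Disjoint (hull (ξ.leaf k)) (hull (ξ.leaf l)) :=
        Set.disjoint_iff_inter_eq_empty.2 (Set.not_nonempty_iff_eq_empty.1 hkl)
      filter_upwards [eventually_disjoint_of_tendsto_hausdorffDist (isCompact_hull _)
        (isCompact_hull _) hdisj (fun n => hausdorffEDist_hull_ne_top (hne n _) (hξne k))
        (fun n => hausdorffEDist_hull_ne_top (hne n _) (hξne l)) (hH k) (hH l)]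
        with n hn _ ⟨z, hz⟩
      exact hn.notMem_of_mem_left hz.1 hz.2
  filter_upwards [eventually_all.2 fun k => eventually_all.2 (hsep k)] with n hn a b hab
  by_contra hno
  exact hn (e n a) (e n b) hno (by simpa using hab)

variable {d : ℕ} {mn : ℕ → Collection} {m : Collection}

lemma tendsto_met_of_mem_leaf (hne : ∀ n a, ((ξn n).leaf a).Nonempty)
    (hξne : ∀ k, (ξ.leaf k).Nonempty) (hH : HConvAlong ξn ξ e)
    (hmn : ∀ n, InducesMajor (ξn n) (mn n)) {k : Fin ξ.s} {u v : Circ} (hu : u ∈ ξ.leaf k)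
    (hv : v ∈ ξ.leaf k) : Tendsto (fun n => met (mn n) u v) atTop (𝓝 0) := by
  refine tendsto_nhds_zero_of_eventually_le (fun n => met_nonneg _ _ _) fun ε hε => ?_
  filter_upwards [eventually_verticesNear hne hξne hH (half_pos hε)] with n hn
  linarith [met_le_of_verticesNear (hmn n) hn.1 hu hv (.refl _)]

lemma tendsto_met_of_reflTransGen (hξ : IsPortrait d ξ)
    (hleaf : ∀ k, ∀ u ∈ ξ.leaf k, ∀ v ∈ ξ.leaf k, Tendsto (fun n => met (mn n) u v) atTop (𝓝 0))
    {k l : Fin ξ.s} (hkl : Relation.ReflTransGen (touchRel ξ) k l) {u v : Circ}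
    (hu : u ∈ ξ.leaf k) (hv : v ∈ ξ.leaf l) : Tendsto (fun n => met (mn n) u v) atTop (𝓝 0) := by
  induction hkl generalizing v with
  | refl => exact hleaf k u hu v hv
  | @tail b c _ hbc ih =>
    rcases eq_or_ne b c with rfl | hne
    · exact ih hv
    obtain ⟨θ, hθb, hθc⟩ := hξ.exists_mem_leaf_mem_leaf hne hbc
    refine squeeze_zero (fun n => met_nonneg _ _ _) (fun n => met_triangle _ u θ v) ?_
    simpa using (ih hθb).add (hleaf c θ hθc v hv)

lemma eventually_leafDiamLE_met_seq (hξ : IsPortrait d ξ) (hne : ∀ n a, ((ξn n).leaf a).Nonempty)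
    (hH : HConvAlong ξn ξ e) (hmn : ∀ n, InducesMajor (ξn n) (mn n)) (hm : InducesMajor ξ m)
    {δ : ℝ} (hδ : 0 < δ) : ∀ᶠ n in atTop, LeafDiamLE m (mn n) δ := by
  refine eventually_all.2 fun t => (eventually_all_finset _).2 fun u hu =>
    (eventually_all_finset _).2 fun v hv => ?_
  obtain ⟨k, l, hu, hv, hkl⟩ := hm.exists_eqvGen_of_mem_leaf hu hv
  rw [Relation.EqvGen.eqvGen_eq_reflTransGen] at hkl
  have hlim := tendsto_met_of_reflTransGen hξ
    (fun k _ hu _ hv => tendsto_met_of_mem_leaf hne hξ.leaf_nonempty hH hmn hu hv) hkl hu hv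
  exact (hlim.eventually (gt_mem_nhds hδ)).mono fun _ => le_of_lt

lemma eventually_leafDiamLE_met_limit (hne : ∀ n a, ((ξn n).leaf a).Nonempty)
    (hξne : ∀ k, (ξ.leaf k).Nonempty) (hH : HConvAlong ξn ξ e)
    (hmn : ∀ n, InducesMajor (ξn n) (mn n)) (hm : InducesMajor ξ m) {δ : ℝ} (hδ : 0 < δ) :
    ∀ᶠ n in atTop, LeafDiamLE (mn n) m δ := by
  filter_upwards [eventually_verticesNear hne hξne hH (half_pos hδ),
    eventually_touchRel_imp hne hξne hH] with n hnear htouch t u hu v hv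
  obtain ⟨a, b, hu, hv, hab⟩ := (hmn n).exists_eqvGen_of_mem_leaf hu hv
  linarith [met_le_of_verticesNear hm hnear.2 hu hv (hab.map (e n) htouch)]

theorem tendsto_md_of_hConvAlong (hξ : IsPortrait d ξ) (hne : ∀ n a, ((ξn n).leaf a).Nonempty)
    (hH : HConvAlong ξn ξ e) (hmn : ∀ n, InducesMajor (ξn n) (mn n)) (hm : InducesMajor ξ m) :
    Tendsto (fun n => md (mn n) m) atTop (𝓝 0) :=
  tendsto_md_of_leafDiamLE (fun n => Fin.equiv_iff_eq.1 ⟨e n⟩ ▸ (hmn n).s_le) hm.s_le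
    (fun _ => eventually_leafDiamLE_met_seq hξ hne hH hmn hm)
    (fun _ => eventually_leafDiamLE_met_limit hne hξ.leaf_nonempty hH hmn hm)

end Convergence

theorem induced_majors_converge_general (d : ℕ)
    (ξn : ℕ → Collection) (hξn : ∀ n, IsPortrait d (ξn n))
    (ξ : Collection) (hξ : IsPortrait d ξ) (hconv : HConv ξn ξ)
    (mn : ℕ → Collection) (m : Collection)
    (hmn : ∀ n, IsPrimitiveMajor d (mn n) ∧ InducesMajor (ξn n) (mn n))
    (hm : IsPrimitiveMajor d m ∧ InducesMajor ξ m) :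
    Filter.Tendsto (fun n => md (mn n) m) Filter.atTop (nhds 0) := by
  obtain ⟨N₀, e, he⟩ := hconv
  rw [← tendsto_add_atTop_iff_nat N₀]
  refine tendsto_md_of_hConvAlong hξ (fun n => (hξn (n + N₀)).leaf_nonempty)
    (e := fun n => e (n + N₀) (Nat.le_add_left N₀ n)) (fun k => ?_) (fun n => (hmn (n + N₀)).2) hm.2
  refine tendsto_nhds_zero_of_eventually_le (fun n => hausdorffDist_nonneg) fun ε hε => ?_
  obtain ⟨M, hM⟩ := he k ε hε
  exact eventually_atTop.2 ⟨M, fun n hn => (hM _ _ (by omega)).le⟩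

/-- Let `(ξ_n)` be a sequence of critical portraits of degree `d` that
Hausdorff-converges to a critical portrait `ξ`.  If `m_n` denotes the primitive major
induced by `ξ_n` and `m` the primitive major induced by `ξ`, then `md(m_n, m) → 0`. -/
theorem induced_majors_converge (d : ℕ) (hd : 2 ≤ d)
    (ξn : ℕ → Collection) (hξn : ∀ n, IsPortrait d (ξn n))
    (ξ : Collection) (hξ : IsPortrait d ξ) (hconv : HConv ξn ξ)
    (mn : ℕ → Collection) (m : Collection)
    (hmn : ∀ n, IsPrimitiveMajor d (mn n) ∧ InducesMajor (ξn n) (mn n))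
    (hm : IsPrimitiveMajor d m ∧ InducesMajor ξ m) :
    Filter.Tendsto (fun n => md (mn n) m) Filter.atTop (nhds 0) :=
  induced_majors_converge_general d ξn hξn ξ hξ hconv mn m hmn hm

end CoreEntropy
end
end

section
/- Let Γ be the graph associated to a labeled wedge of size s. Then every vertex lying on a closed path of length n in Γ has height at most n, and every vertex lying on a closed path of length n in Γ has width at most 2n. -/
/-!
Common definitions for the formalization of
"Core entropy of polynomials of arbitrary degree" (Gao–Tiozzo).
-/

open Set Metric Filter Topology

attribute [local instance] Classical.propDecidable

noncomputable section

namespace CoreEntropy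

/-!
An index `t + 1 ≥ 2` at the target of an edge comes from the index `t` at its source, because
new symbols enter with index `1`. Following an index `t > n` backwards once around a closed
path of length `n` therefore yields the index `t - n` at the same vertex. For the height this
is absurd, and for the width it forces `width - n = height ≤ n`.
-/

section Indices

variable {s : ℕ}

/-- `t` is one of the two indices `i, j` of the vertex `{y_k(i), y_l(j)}`. -/
def HasIndex (v : Vtx s) (t : ℕ) : Prop := ∃ a ∈ v, (a.2 : ℕ) = t

lemma mk_ordRep (v : Vtx s) : Sym2.mk (ordRep v).1 (ordRep v).2 = v := by
  induction v using Sym2.inductionOn with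
  | hf a b => simp only [ordRep, Sym2.lift_mk, pick]; split_ifs <;> simp [Sym2.eq_swap]

lemma vheight_mk (a b : Sym s) : vheight (Sym2.mk a b) = min (a.2 : ℕ) (b.2 : ℕ) := by
  simp only [vheight, ordRep, Sym2.lift_mk, pick]
  split_ifs
  exacts [rfl, min_comm _ _]

lemma vwidth_mk (a b : Sym s) : vwidth (Sym2.mk a b) = max (a.2 : ℕ) (b.2 : ℕ) := by
  simp only [vwidth, ordRep, Sym2.lift_mk, pick]
  split_ifs
  exacts [rfl, max_comm _ _]

lemma hasIndex_mk {a b : Sym s} {t : ℕ} :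
    HasIndex (Sym2.mk a b) t ↔ (a.2 : ℕ) = t ∨ (b.2 : ℕ) = t := by
  simp [HasIndex]

lemma hasIndex_vheight (v : Vtx s) : HasIndex v (vheight v) := by
  induction v using Sym2.inductionOn with
  | hf a b => rw [vheight_mk, hasIndex_mk]; omega

lemma hasIndex_vwidth (v : Vtx s) : HasIndex v (vwidth v) := by
  induction v using Sym2.inductionOn with
  | hf a b => rw [vwidth_mk, hasIndex_mk]; omega

lemma HasIndex.eq_vheight_or_eq_vwidth {v : Vtx s} {t : ℕ} (h : HasIndex v t) :
    t = vheight v ∨ t = vwidth v := by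
  induction v using Sym2.inductionOn with
  | hf a b => rw [vheight_mk, vwidth_mk]; rw [hasIndex_mk] at h; omega

lemma HasIndex.vheight_le {v : Vtx s} {t : ℕ} (h : HasIndex v t) : vheight v ≤ t := by
  rcases h.eq_vheight_or_eq_vwidth with rfl | rfl
  exacts [le_rfl, min_le_max]

end Indices

section Edges

variable {s : ℕ} {W : LabeledWedge s}

lemma hasIndex_one_of_mem_centrals {L : List (Fin s)} {v : Vtx s} (hv : v ∈ centrals L)
    {t : ℕ} (ht : HasIndex v t) : t = 1 := by
  obtain ⟨q, -, rfl⟩ := List.mem_map.mp hv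
  rw [hasIndex_mk] at ht
  simpa [eq_comm] using ht

/-- Every edge raises the indices it carries over by one, and all new indices equal `1`. -/
lemma HasIndex.of_mem_targets {a b : Sym s} {v : Vtx s} (hv : v ∈ targets W a b) {t : ℕ}
    (ht : 0 < t) (h : HasIndex v (t + 1)) : HasIndex (Sym2.mk a b) t := by
  rw [hasIndex_mk]
  unfold targets at hv
  split_ifs at hv
  · rw [List.mem_singleton] at hv
    subst hv
    simpa [hasIndex_mk, succSym] using h
  · simp only [List.cons_append, List.mem_cons, List.mem_append,
      List.mem_nil_iff, or_false] at hv
    rcases hv with rfl | hv | rfl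
    · simp only [hasIndex_mk, succSym, PNat.add_coe, PNat.val_ofNat] at h; omega
    · have := hasIndex_one_of_mem_centrals hv h; omega
    · simp only [hasIndex_mk, succSym, PNat.add_coe, PNat.val_ofNat] at h; omega

lemma HasIndex.of_numEdges_pos {u v : Vtx s} (huv : 0 < numEdges W u v) {t : ℕ}
    (ht : 0 < t) (h : HasIndex v (t + 1)) : HasIndex u t := by
  rw [← mk_ordRep u]
  exact h.of_mem_targets (List.count_pos_iff.mp huv) ht

lemma HasIndex.of_walk {f : ℕ → Vtx s} (hf : ∀ k, 0 < numEdges W (f k) (f (k + 1)))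
    {k m t : ℕ} (ht : 0 < t) (h : HasIndex (f (k + m)) (t + m)) : HasIndex (f k) t := by
  induction m generalizing t with
  | zero => exact h
  | succ m ih => exact ih ht (h.of_numEdges_pos (hf (k + m)) (by omega))

end Edges

namespace ClosedPaths

variable {G : Digraph'} {n : ℕ}

lemma edge_pos (p : ClosedPaths G n) (i : Fin n) : 0 < G.E (p.1 i) (p.1 (cyc i)) :=
  (p.2 i).pos

def unroll (p : ClosedPaths G n) (hn : 0 < n) (k : ℕ) : G.V :=
  p.1 ⟨k % n, Nat.mod_lt k hn⟩

lemma unroll_edge_pos (p : ClosedPaths G n) (hn : 0 < n) (k : ℕ) :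
    0 < G.E (p.unroll hn k) (p.unroll hn (k + 1)) := by
  have hcyc : cyc (⟨k % n, Nat.mod_lt k hn⟩ : Fin n) = ⟨(k + 1) % n, Nat.mod_lt _ hn⟩ :=
    Fin.ext (Nat.mod_add_mod k n 1)
  simpa only [unroll, hcyc] using p.edge_pos ⟨k % n, Nat.mod_lt k hn⟩

lemma unroll_add_length (p : ClosedPaths G n) (i : Fin n) :
    p.unroll i.pos (i + n) = p.1 i := by
  simp [unroll, Nat.mod_eq_of_lt i.isLt]

lemma hasIndex_sub_length {s : ℕ} {W : LabeledWedge s} (p : ClosedPaths (wedgeGraph W) n)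
    (i : Fin n) {t : ℕ} (hnt : n < t) (h : HasIndex (p.1 i) t) : HasIndex (p.1 i) (t - n) := by
  have hwalk := HasIndex.of_walk (f := p.unroll i.pos) (k := i) (m := n) (t := t - n)
    (p.unroll_edge_pos i.pos) (by omega)
  rw [unroll_add_length, Nat.sub_add_cancel hnt.le] at hwalk
  simpa [unroll, Nat.mod_eq_of_lt i.isLt] using hwalk h

end ClosedPaths

theorem closed_path_height_width_general (s : ℕ) (W : LabeledWedge s) (n : ℕ)
    (p : ClosedPaths (wedgeGraph W) n) (i : Fin n) :
    vheight (p.1 i) ≤ n ∧ vwidth (p.1 i) ≤ 2 * n := by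
  have hn : 0 < n := i.pos
  have hheight : vheight (p.1 i) ≤ n := by
    by_contra! hlt
    have := (p.hasIndex_sub_length i hlt (hasIndex_vheight _)).vheight_le
    omega
  refine ⟨hheight, ?_⟩
  by_contra! hlt
  rcases (p.hasIndex_sub_length i (by omega) (hasIndex_vwidth _)).eq_vheight_or_eq_vwidth
    with h | h <;> omega

/-- Let `Γ` be the graph associated to a labeled wedge of size `s`.  Then
every vertex lying on a closed path of length `n` in `Γ` has height at most `n`, and every
vertex lying on a closed path of length `n` in `Γ` has width at most `2n`. -/
theorem closed_path_height_width (s : ℕ) (hs : 1 ≤ s) (W : LabeledWedge s) (n : ℕ)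
    (p : ClosedPaths (wedgeGraph W) n) (i : Fin n) :
    vheight (p.1 i) ≤ n ∧ vwidth (p.1 i) ≤ 2 * n :=
  closed_path_height_width_general s W n p i

end CoreEntropy
end
end
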